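/- arXiv:hep-th/0510047 — 2 statements merged into one kernel-verified Lean document; each statement's English description precedes it below -/
import Mathlib

section
/- For all complex numbers s₁, s₂ with 2s₁ ≠ s₂ and s₁ ≠ 2s₂, setting x₃ = s₁(s₁ − 2s₂)/(2s₁ − s₂)² and x₄ = −s₂(2s₁ − s₂)/(s₁ − 2s₂)², one has 27·x₃²·x₄² − 18·x₃·x₄ + 4·x₃ + 4·x₄ − 1 = 0. That is, the Horn uniformization map lands on the zero locus of the discriminant polynomial Δ₀. -/
/-- Horn uniformization lands on the zero locus of the discriminant
Δ₀(x,y) = 27x²y² − 18xy + 4x + 4y − 1 of the ℂ²/ℤ₃ Kähler moduli space. -/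
theorem horn_uniformization_on_discriminant (s₁ s₂ : ℂ)
    (h₁ : 2 * s₁ ≠ s₂) (h₂ : s₁ ≠ 2 * s₂) :
    let x₃ : ℂ := s₁ * (s₁ - 2 * s₂) / (2 * s₁ - s₂) ^ 2
    let x₄ : ℂ := -(s₂ * (2 * s₁ - s₂)) / (s₁ - 2 * s₂) ^ 2
    27 * x₃ ^ 2 * x₄ ^ 2 - 18 * x₃ * x₄ + 4 * x₃ + 4 * x₄ - 1 = 0 := by
  have ha : (2 * s₁ - s₂) ≠ 0 := sub_ne_zero.mpr h₁
  have hb : (s₁ - 2 * s₂) ≠ 0 := sub_ne_zero.mpr h₂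
  intro x₃ x₄
  have ha2 : ((2 * s₁ - s₂) ^ 2 : ℂ) ≠ 0 := pow_ne_zero 2 ha
  have hb2 : ((s₁ - 2 * s₂) ^ 2 : ℂ) ≠ 0 := pow_ne_zero 2 hb
  have e3 : x₃ * (2 * s₁ - s₂) ^ 2 = s₁ * (s₁ - 2 * s₂) := div_mul_cancel₀ _ ha2
  have e4 : x₄ * (s₁ - 2 * s₂) ^ 2 = -(s₂ * (2 * s₁ - s₂)) := div_mul_cancel₀ _ hb2
  have hd : ((2 * s₁ - s₂) ^ 4 * (s₁ - 2 * s₂) ^ 4 : ℂ) ≠ 0 :=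
    mul_ne_zero (pow_ne_zero 4 ha) (pow_ne_zero 4 hb)
  have key : (27 * x₃ ^ 2 * x₄ ^ 2 - 18 * x₃ * x₄ + 4 * x₃ + 4 * x₄ - 1) *
      ((2 * s₁ - s₂) ^ 4 * (s₁ - 2 * s₂) ^ 4) = 0 := by
    have expand : (27 * x₃ ^ 2 * x₄ ^ 2 - 18 * x₃ * x₄ + 4 * x₃ + 4 * x₄ - 1) *
        ((2 * s₁ - s₂) ^ 4 * (s₁ - 2 * s₂) ^ 4)
        = 27 * (x₃ * (2 * s₁ - s₂) ^ 2) ^ 2 * (x₄ * (s₁ - 2 * s₂) ^ 2) ^ 2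
          - 18 * (x₃ * (2 * s₁ - s₂) ^ 2) * (x₄ * (s₁ - 2 * s₂) ^ 2)
              * ((2 * s₁ - s₂) ^ 2 * (s₁ - 2 * s₂) ^ 2)
          + 4 * (x₃ * (2 * s₁ - s₂) ^ 2) * ((2 * s₁ - s₂) ^ 2 * (s₁ - 2 * s₂) ^ 4)
          + 4 * (x₄ * (s₁ - 2 * s₂) ^ 2) * ((2 * s₁ - s₂) ^ 4 * (s₁ - 2 * s₂) ^ 2)
          - (2 * s₁ - s₂) ^ 4 * (s₁ - 2 * s₂) ^ 4 := by ring
    rw [expand, e3, e4]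
    ring
  exact (mul_eq_zero.mp key).resolve_right hd
end

section
/- A point (x,y) ∈ ℂ² satisfies Δ₀(x,y) = 0, ∂Δ₀/∂x(x,y) = 0 and ∂Δ₀/∂y(x,y) = 0 if and only if (x,y) = (1/3, 1/3). In particular, the plane curve Δ₀ = 0 has a unique singular point, located at (1/3, 1/3). -/
/-- The discriminant curve Δ₀(x,y) = 27x²y² − 18xy + 4x + 4y − 1 = 0 has a unique
singular point, located at (1/3, 1/3): a point satisfies Δ₀ = ∂Δ₀/∂x = ∂Δ₀/∂y = 0
iff it equals (1/3, 1/3). -/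
theorem discriminant_unique_singular_point (x y : ℂ) :
    (27 * x ^ 2 * y ^ 2 - 18 * x * y + 4 * x + 4 * y - 1 = 0 ∧
     54 * x * y ^ 2 - 18 * y + 4 = 0 ∧
     54 * x ^ 2 * y - 18 * x + 4 = 0) ↔ (x = 1 / 3 ∧ y = 1 / 3) := by
  constructor
  · rintro ⟨h1, h2, h3⟩
    have key : (y - x) * (54 * x * y - 18) = 0 := by linear_combination h2 - h3
    rcases mul_eq_zero.mp key with hyx | hxy
    · have hy : y = x := by linear_combination hyx
      subst hy
      have hA : (3 * y - 1) ^ 2 * (3 * y + 2) = 0 := by linear_combination h2 / 2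
      have hB : (3 * y - 1) ^ 2 * (3 * y ^ 2 + 2 * y - 1) = 0 := by linear_combination h1
      have hsq : (3 * y - 1) ^ 2 = 0 := by linear_combination y * hA - hB
      have hy3 : 3 * y - 1 = 0 := sq_eq_zero_iff.mp hsq
      constructor <;> linear_combination hy3 / 3
    · exfalso
      have : (4 : ℂ) = 0 := by linear_combination h2 - y * hxy
      norm_num at this
  · rintro ⟨hx, hy⟩
    subst hx; subst hy
    norm_num
end
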